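/- arXiv:1103.1485 — 6 statements merged into one kernel-verified Lean document; each statement's English description precedes it below -/
import Mathlib

section
/- Let d ≥ 3 and let A = [[z1, q1],[z2, q2]] be a 2×2 matrix over k[x0,x1,x2] with z1, z2 linearly independent linear forms, q1, q2 forms of degree d−1, and det(A) = z1·q2 − z2·q1 ≠ 0. Suppose g is a 2×2 matrix with entries in k, λ, μ ∈ k are nonzero, q is a form of degree d−1, and g·A = A·[[λ, q],[0, μ]] (constants viewed as constant polynomials). Then g = λ·I, μ = λ, and q = 0. -/
open MvPolynomial

/-- The stabilizer of a point of the parameter space `X` is trivial: if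
`g·A = A·[[λ, q],[0, μ]]` then `g = λ·I`, `μ = λ` and `q = 0`. -/
theorem stmt_3 {k : Type*} [Field k] [IsAlgClosed k] [CharZero k]
    (d : ℕ) (hd : 3 ≤ d)
    (z1 z2 q1 q2 : MvPolynomial (Fin 3) k)
    (hz1 : z1.IsHomogeneous 1) (hz2 : z2.IsHomogeneous 1)
    (hind : LinearIndependent k ![z1, z2])
    (hq1 : q1.IsHomogeneous (d - 1)) (hq2 : q2.IsHomogeneous (d - 1))
    (hdet : z1 * q2 - z2 * q1 ≠ 0)
    (g : Matrix (Fin 2) (Fin 2) k) (lam mu : k)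
    (hlam : lam ≠ 0) (hmu : mu ≠ 0)
    (q : MvPolynomial (Fin 3) k) (hq : q.IsHomogeneous (d - 1))
    (hcomm : g.map C * !![z1, q1; z2, q2] = !![z1, q1; z2, q2] * !![C lam, q; 0, C mu]) :
    g = lam • (1 : Matrix (Fin 2) (Fin 2) k) ∧ mu = lam ∧ q = 0 := by
  have h := Matrix.ext_iff.2 hcomm
  have h00 := h 0 0
  have h01 := h 0 1
  have h10 := h 1 0
  have h11 := h 1 1
  simp [Matrix.mul_apply, Fin.sum_univ_two, Matrix.map_apply] at h00 h01 h10 h11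
  have hp := LinearIndependent.pair_iff.1 hind
  have e1 := hp (g 0 0 - lam) (g 0 1) (by
    simp only [smul_eq_C_mul, map_sub]
    linear_combination h00)
  have e2 := hp (g 1 0) (g 1 1 - lam) (by
    simp only [smul_eq_C_mul, map_sub]
    linear_combination h10)
  have hg00 : g 0 0 = lam := sub_eq_zero.mp e1.1
  have hg11 : g 1 1 = lam := sub_eq_zero.mp e2.2
  have hg01 : g 0 1 = 0 := e1.2
  have hg10 : g 1 0 = 0 := e2.1
  rw [hg00, hg01] at h01
  rw [hg10, hg11] at h11
  simp only [map_zero, zero_mul, add_zero, zero_add] at h01 h11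
  have key : (C lam - C mu) * (z1 * q2 - z2 * q1) = 0 := by
    linear_combination z1 * h11 - z2 * h01
  have hlm : lam = mu := by
    rcases mul_eq_zero.mp key with hc | hc
    · exact MvPolynomial.C_injective _ _ (sub_eq_zero.mp hc)
    · exact absurd hc hdet
  have hz1ne : z1 ≠ 0 := by
    have := hind.ne_zero 0
    simpa using this
  have hq0 : q = 0 := by
    have hz1q : z1 * q = 0 := by
      rw [hlm] at h01
      linear_combination -h01
    rcases mul_eq_zero.mp hz1q with hc | hc
    · exact absurd hc hz1ne
    · exact hc
  refine ⟨?_, hlm.symm, hq0⟩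
  ext i j
  fin_cases i <;> fin_cases j <;>
    simp [hg00, hg01, hg10, hg11, Matrix.one_apply]
end

section
/- Let d ≥ 1, let f be a form of degree d in k[x0,x1,x2], and let ξ, η ∈ k satisfy f(1, ξ, η) = 0. Then there exist forms G, H of degree d−1 such that f = (x1 − ξ·x0)·G + (x2 − η·x0)·H. -/
/-!
Modulo the ideal `I = (x₁ - ξ x₀, x₂ - η x₀)` every variable becomes a multiple of `x₀`:
`xⱼ ≡ vⱼ x₀` with `v = (1, ξ, η)`. Hence a form `f` of degree `d` satisfies
`f ≡ f(x₀ v) = x₀ᵈ f(v) = 0`, i.e. `f ∈ I`. Since the generators of `I` are linear forms,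
taking the degree-`(d - 1)` components of any cofactors gives homogeneous ones.
-/

namespace MvPolynomial

variable {σ R : Type*} [CommSemiring R]

theorem IsHomogeneous.aeval_mul {S : Type*} [CommSemiring S] [Algebra R S]
    {f : MvPolynomial σ R} {d : ℕ} (hf : f.IsHomogeneous d) (t : S) (x : σ → S) :
    MvPolynomial.aeval (fun j => t * x j) f = t ^ d * MvPolynomial.aeval x f := by
  conv_lhs => rw [f.as_sum]
  conv_rhs => rw [f.as_sum]
  rw [map_sum, map_sum, Finset.mul_sum]
  refine Finset.sum_congr rfl fun m hm => ?_
  rw [aeval_monomial, aeval_monomial, ← hf (mem_support_iff.mp hm), Finsupp.weight_apply]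
  simp only [Finsupp.prod, Finsupp.sum, Pi.one_apply, smul_eq_mul, mul_one, mul_pow,
    Finset.prod_mul_distrib, Finset.prod_pow_eq_pow_sum]
  ring

theorem homogeneousComponent_mul_of_isHomogeneous_left {L : MvPolynomial σ R} {e : ℕ}
    (hL : L.IsHomogeneous e) (G : MvPolynomial σ R) (n : ℕ) :
    homogeneousComponent (e + n) (L * G) = L * homogeneousComponent n G := by
  let := MvPolynomial.gradedAlgebra (σ := σ) (R := R)
  simpa only [← DirectSum.Decomposition.decompose'_eq, decomposition.decompose'_apply] using
    DirectSum.coe_decompose_mul_add_of_left_mem (homogeneousSubmodule σ R) hL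

theorem IsHomogeneous.mem_of_eval_eq_zero {R : Type*} [CommRing R] {f : MvPolynomial σ R}
    {d : ℕ} (hf : f.IsHomogeneous d) {v : σ → R} (hv : eval v f = 0) (i : σ)
    {I : Ideal (MvPolynomial σ R)} (hI : ∀ j, X j - C (v j) * X i ∈ I) : f ∈ I := by
  let π := Ideal.Quotient.mkₐ R I
  have hX : ∀ j, π (X j) = π (X i) * algebraMap R _ (v j) := fun j => by
    rw [mul_comm, ← π.commutes, algebraMap_eq, ← map_mul]
    exact (Ideal.Quotient.mk_eq_mk_iff_sub_mem _ _).mpr (hI j)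
  rw [← Ideal.Quotient.eq_zero_iff_mem]
  change π f = 0
  rw [← aeval_X_left_apply f, comp_aeval_apply, _root_.funext hX, hf.aeval_mul,
    ← Function.comp_def (algebraMap R _) v, aeval_algebraMap_apply, aeval_eq_eval, hv,
    map_zero, mul_zero]

theorem IsHomogeneous.exists_eq_mul_add_mul_of_mem_span_pair {L₁ L₂ f : MvPolynomial σ R}
    {e n : ℕ} (hf : f.IsHomogeneous (e + n)) (hL₁ : L₁.IsHomogeneous e)
    (hL₂ : L₂.IsHomogeneous e) (hmem : f ∈ Ideal.span {L₁, L₂}) :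
    ∃ G H : MvPolynomial σ R,
      G.IsHomogeneous n ∧ H.IsHomogeneous n ∧ f = L₁ * G + L₂ * H := by
  obtain ⟨G, H, rfl⟩ := Ideal.mem_span_pair.mp hmem
  refine ⟨homogeneousComponent n G, homogeneousComponent n H,
    homogeneousComponent_isHomogeneous n G, homogeneousComponent_isHomogeneous n H, ?_⟩
  rw [← homogeneousComponent_eq_self hf, map_add, mul_comm G, mul_comm H,
    homogeneousComponent_mul_of_isHomogeneous_left hL₁,
    homogeneousComponent_mul_of_isHomogeneous_left hL₂]

end MvPolynomial

open MvPolynomial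

theorem stmt_4_general {k : Type*} [Field k]
    (d : ℕ) (hd : 1 ≤ d)
    (f : MvPolynomial (Fin 3) k) (hf : f.IsHomogeneous d)
    (ξ η : k) (hval : eval ![1, ξ, η] f = 0) :
    ∃ G H : MvPolynomial (Fin 3) k,
      G.IsHomogeneous (d - 1) ∧ H.IsHomogeneous (d - 1) ∧
        f = (X 1 - C ξ * X 0) * G + (X 2 - C η * X 0) * H := by
  have hL : ∀ a : k, ∀ j : Fin 3, (X j - C a * X 0 : MvPolynomial (Fin 3) k).IsHomogeneous 1 :=
    fun a j => (isHomogeneous_X k j).sub ((isHomogeneous_X k 0).C_mul a)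
  have hmem : f ∈ Ideal.span {X 1 - C ξ * X 0, X 2 - C η * X 0} :=
    hf.mem_of_eval_eq_zero hval 0 fun j => by
      fin_cases j
      · simp
      all_goals exact Ideal.subset_span (by simp)
  rw [← Nat.add_sub_cancel' hd] at hf
  exact hf.exists_eq_mul_add_mul_of_mem_span_pair (hL ξ 1) (hL η 2) hmem

/-- If `f` is a form of degree `d ≥ 1` vanishing at `(1, ξ, η)`, then
`f = (x1 − ξ·x0)·G + (x2 − η·x0)·H` for some forms `G, H` of degree `d − 1`. -/
theorem stmt_4 {k : Type*} [Field k] [IsAlgClosed k] [CharZero k]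
    (d : ℕ) (hd : 1 ≤ d)
    (f : MvPolynomial (Fin 3) k) (hf : f.IsHomogeneous d)
    (ξ η : k) (hval : eval ![1, ξ, η] f = 0) :
    ∃ G H : MvPolynomial (Fin 3) k,
      G.IsHomogeneous (d - 1) ∧ H.IsHomogeneous (d - 1) ∧
        f = (X 1 - C ξ * X 0) * G + (X 2 - C η * X 0) * H :=
  stmt_4_general d hd f hf ξ η hval
end

section
/- Let d ≥ 3, let z1, z2 be linearly independent linear forms in k[x0,x1,x2], let q1, q2 be forms of degree d−1, set f = z1·q2 − z2·q1, and let p ∈ k^3 be nonzero with z1(p) = 0 and z2(p) = 0. Then q1(p) = 0 and q2(p) = 0 if and only if (∂f/∂x_i)(p) = 0 for all i = 0, 1, 2. -/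
open MvPolynomial

lemma aux_deg1 {m : Fin 3 →₀ ℕ} (h : Finsupp.degree m = 1) :
    ∃ i : Fin 3, m = Finsupp.single i 1 := by
  have hs : ∑ i : Fin 3, m i = 1 := by
    rw [Finsupp.degree] at h
    rw [← Finset.sum_subset (Finset.subset_univ m.support) (by
      intro x _ hx
      simpa using Finsupp.notMem_support_iff.mp hx)]
    exact h
  rw [Fin.sum_univ_three] at hs
  have h0 : m 0 = 1 ∧ m 1 = 0 ∧ m 2 = 0 ∨ m 0 = 0 ∧ m 1 = 1 ∧ m 2 = 0 ∨
      m 0 = 0 ∧ m 1 = 0 ∧ m 2 = 1 := by omega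
  rcases h0 with ⟨h0, h1, h2⟩ | ⟨h0, h1, h2⟩ | ⟨h0, h1, h2⟩
  · exact ⟨0, by ext j; fin_cases j <;> simp_all⟩
  · exact ⟨1, by ext j; fin_cases j <;> simp_all⟩
  · exact ⟨2, by ext j; fin_cases j <;> simp_all⟩

lemma aux_decomp {k : Type*} [Field k] (z : MvPolynomial (Fin 3) k)
    (hz : z.IsHomogeneous 1) :
    z = ∑ j : Fin 3, C (coeff (Finsupp.single j 1) z) * X j := by
  apply MvPolynomial.ext
  intro m
  rw [coeff_sum]
  simp only [coeff_C_mul, coeff_X']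
  by_cases hm : ∃ i : Fin 3, m = Finsupp.single i 1
  · obtain ⟨i, rfl⟩ := hm
    rw [Finset.sum_eq_single i]
    · simp
    · intro j _ hj
      simp [Finsupp.single_left_inj one_ne_zero, hj]
    · simp
  · have hz0 : coeff m z = 0 := by
      by_contra h0
      exact hm (aux_deg1 (by rw [Finsupp.degree_eq_weight_one]; exact hz h0))
    rw [hz0]
    rw [Finset.sum_eq_zero]
    intro j _
    have : ¬ Finsupp.single j 1 = m := fun h => hm ⟨j, h.symm⟩
    simp [this]

lemma aux_pderiv {k : Type*} [Field k] (z : MvPolynomial (Fin 3) k)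
    (hz : z.IsHomogeneous 1) (i : Fin 3) :
    pderiv i z = C (coeff (Finsupp.single i 1) z) := by
  conv_lhs => rw [aux_decomp z hz]
  rw [map_sum]
  rw [Finset.sum_eq_single i]
  · simp
  · intro j _ hj
    simp [pderiv_X_of_ne hj]
  · simp

/-- Let `f = z1·q2 − z2·q1` with `z1, z2` linearly independent linear forms and
`q1, q2` forms of degree `d − 1`, and let `p ≠ 0` be a common zero of `z1, z2`.
Then `q1(p) = q2(p) = 0` if and only if all partial derivatives of `f` vanish at `p`. -/
theorem stmt_7 {k : Type*} [Field k] [IsAlgClosed k] [CharZero k]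
    (d : ℕ) (hd : 3 ≤ d)
    (z1 z2 : MvPolynomial (Fin 3) k)
    (hz1 : z1.IsHomogeneous 1) (hz2 : z2.IsHomogeneous 1)
    (hind : LinearIndependent k ![z1, z2])
    (q1 q2 : MvPolynomial (Fin 3) k)
    (hq1 : q1.IsHomogeneous (d - 1)) (hq2 : q2.IsHomogeneous (d - 1))
    (f : MvPolynomial (Fin 3) k) (hf : f = z1 * q2 - z2 * q1)
    (p : Fin 3 → k) (hp : p ≠ 0)
    (hz1p : eval p z1 = 0) (hz2p : eval p z2 = 0) :
    (eval p q1 = 0 ∧ eval p q2 = 0) ↔ ∀ i : Fin 3, eval p (pderiv i f) = 0 := by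
  have key : ∀ i : Fin 3, eval p (pderiv i f) =
      coeff (Finsupp.single i 1) z1 * eval p q2
        - coeff (Finsupp.single i 1) z2 * eval p q1 := by
    intro i
    rw [hf, map_sub, pderiv_mul, pderiv_mul, aux_pderiv z1 hz1 i, aux_pderiv z2 hz2 i]
    simp [hz1p, hz2p]
  constructor
  · rintro ⟨h1, h2⟩ i
    rw [key i, h1, h2]
    ring
  · intro h
    have hlin : eval p q2 • z1 + (-(eval p q1)) • z2 = 0 := by
      rw [aux_decomp z1 hz1, aux_decomp z2 hz2, Finset.smul_sum, Finset.smul_sum,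
        ← Finset.sum_add_distrib]
      apply Finset.sum_eq_zero
      intro i _
      have := h i
      rw [key i] at this
      rw [← smul_mul_assoc, ← smul_mul_assoc, ← add_mul]
      have hC : (eval p q2 • C (coeff (Finsupp.single i 1) z1)
          + (-(eval p q1)) • C (coeff (Finsupp.single i 1) z2)
          : MvPolynomial (Fin 3) k) = 0 := by
        rw [smul_eq_C_mul, smul_eq_C_mul, ← map_mul, ← map_mul, ← map_add]
        rw [show eval p q2 * coeff (Finsupp.single i 1) z1
            + -eval p q1 * coeff (Finsupp.single i 1) z2 = 0 by linear_combination this]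
        simp
      rw [hC, zero_mul]
    obtain ⟨hc1, hc2⟩ := LinearIndependent.pair_iff.mp hind _ _ hlin
    exact ⟨by simpa using hc2, hc1⟩
end

section
/- Let d ≥ 3. Let A_{ij} ∈ k be given for all integers i, j ≥ 0 with i + j ≤ d−1, with A_{00} = 0; let ξ_{ij} ∈ k be given for the same index range; and let ξ0, ξ1, ξ2, η0, η1, η2 ∈ k. In the polynomial ring k[t], set a = (t·ξ0, 1 + t·ξ1, t·ξ2), b = (t·η0, t·η1, 1 + t·η2), and define D0 = a1·b2 − a2·b1, D1 = a2·b0 − a0·b2, D2 = a0·b1 − a1·b0 ∈ k[t], and g = Σ_{i+j ≤ d−1} (A_{ij} + t·ξ_{ij})·D0^{d−1−i−j}·D1^i·D2^j ∈ k[t]. Then the coefficient of t^0 in g is 0 and the coefficient of t^1 in g equals ξ_{00} − A_{10}·ξ0 − A_{01}·η0. -/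
open Polynomial

private lemma coeff1_mul' {k : Type*} [CommRing k] (p q : Polynomial k) :
    (p*q).coeff 1 = p.coeff 0 * q.coeff 1 + p.coeff 1 * q.coeff 0 := by
  rw [coeff_mul, Finset.Nat.sum_antidiagonal_eq_sum_range_succ_mk]
  simp [Finset.sum_range_succ]

private lemma coeff0_pow' {k : Type*} [CommRing k] (p : Polynomial k) (n : ℕ) :
    (p^n).coeff 0 = p.coeff 0 ^ n := by
  simpa [constantCoeff_apply] using map_pow (constantCoeff (R := k)) p n

private lemma mulz' {k : Type*} [CommRing k] (r p : Polynomial k)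
    (h0 : p.coeff 0 = 0) (h1 : p.coeff 1 = 0) :
    (r * p).coeff 0 = 0 ∧ (r * p).coeff 1 = 0 := by
  constructor
  · rw [mul_coeff_zero, h0, mul_zero]
  · rw [coeff1_mul', h0, h1]; ring

private lemma powz' {k : Type*} [CommRing k] (p : Polynomial k) (h0 : p.coeff 0 = 0) (n : ℕ) :
    (p^(n+2)).coeff 0 = 0 ∧ (p^(n+2)).coeff 1 = 0 := by
  have : p^(n+2) = p^n * (p * p) := by ring
  rw [this]
  refine mulz' _ _ ?_ ?_
  · rw [mul_coeff_zero, h0, mul_zero]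
  · rw [coeff1_mul', h0]; ring

/-- Computation of the tangent equations of the locus of singular sheaves: with
`a = (t·ξ0, 1 + t·ξ1, t·ξ2)`, `b = (t·η0, t·η1, 1 + t·η2)` in `k[t]`, minors
`D0, D1, D2`, and `g = Σ_{i+j ≤ d−1} (A_{ij} + t·ξ_{ij})·D0^{d−1−i−j}·D1^i·D2^j`,
the coefficient of `t^0` in `g` is `0` and the coefficient of `t^1` is
`ξ_{00} − A_{10}·ξ0 − A_{01}·η0`. -/
theorem stmt_9 {k : Type*} [Field k] [IsAlgClosed k] [CharZero k]
    (d : ℕ) (hd : 3 ≤ d)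
    (A : ℕ → ℕ → k) (hA00 : A 0 0 = 0)
    (Ξ : ℕ → ℕ → k)
    (ξ0 ξ1 ξ2 η0 η1 η2 : k)
    (D0 D1 D2 g : Polynomial k)
    (hD0 : D0 = (1 + C ξ1 * X) * (1 + C η2 * X) - (C ξ2 * X) * (C η1 * X))
    (hD1 : D1 = (C ξ2 * X) * (C η0 * X) - (C ξ0 * X) * (1 + C η2 * X))
    (hD2 : D2 = (C ξ0 * X) * (C η1 * X) - (1 + C ξ1 * X) * (C η0 * X))
    (hg : g = ∑ i ∈ Finset.range d, ∑ j ∈ Finset.range (d - i),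
        (C (A i j) + C (Ξ i j) * X) * D0 ^ (d - 1 - i - j) * D1 ^ i * D2 ^ j) :
    g.coeff 0 = 0 ∧ g.coeff 1 = Ξ 0 0 - A 1 0 * ξ0 - A 0 1 * η0 := by
  have hD0c0 : D0.coeff 0 = 1 := by rw [hD0]; simp
  have hD1c0 : D1.coeff 0 = 0 := by rw [hD1]; simp
  have hD2c0 : D2.coeff 0 = 0 := by rw [hD2]; simp
  have hD1c1 : D1.coeff 1 = -ξ0 := by rw [hD1]; simp [coeff1_mul']
  have hD2c1 : D2.coeff 1 = -η0 := by rw [hD2]; simp [coeff1_mul']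
  set T : ℕ → ℕ → Polynomial k := fun i j =>
    (C (A i j) + C (Ξ i j) * X) * D0 ^ (d - 1 - i - j) * D1 ^ i * D2 ^ j with hT
  have hQ0 : ∀ i j : ℕ, (C (A i j) + C (Ξ i j) * X).coeff 0 = A i j := by intro i j; simp
  have hQ1 : ∀ i j : ℕ, (C (A i j) + C (Ξ i j) * X).coeff 1 = Ξ i j := by intro i j; simp
  have hP0 : ∀ n : ℕ, (D0 ^ n).coeff 0 = 1 := by
    intro n; rw [coeff0_pow', hD0c0, one_pow]
  -- coefficient 0 of each term
  have hT0 : ∀ i j : ℕ, (T i j).coeff 0 = 0 := by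
    intro i j
    rw [hT]
    simp only [mul_coeff_zero, hP0, hQ0, coeff0_pow', hD1c0, hD2c0]
    match i, j with
    | 0, 0 => simp [hA00]
    | 0, j+1 => simp
    | i+1, j => simp
  -- coefficient 1 of each term
  have hT1 : ∀ i j : ℕ, (T i j).coeff 1 =
      (if i = 0 ∧ j = 0 then Ξ 0 0 else if i = 1 ∧ j = 0 then -(A 1 0 * ξ0)
        else if i = 0 ∧ j = 1 then -(A 0 1 * η0) else 0) := by
    intro i j
    rw [hT]
    match i, j with
    | 0, 0 =>
      simp only [pow_zero, mul_one]
      rw [coeff1_mul', hQ0, hQ1, hP0, hA00]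
      simp
    | 1, 0 =>
      simp only [pow_zero, pow_one, mul_one]
      rw [coeff1_mul', hD1c1, hD1c0, mul_coeff_zero, hQ0, hP0]
      simp
    | 0, 1 =>
      simp only [pow_zero, pow_one, mul_one]
      rw [coeff1_mul', hD2c1, hD2c0, mul_coeff_zero, hQ0, hP0]
      simp
    | 0, j+2 =>
      obtain ⟨_, h1⟩ := powz' D2 hD2c0 j
      obtain ⟨h0', _⟩ := powz' D2 hD2c0 j
      rw [(mulz' _ _ h0' h1).2]
      simp
    | i+2, 0 =>
      simp only [pow_zero, mul_one]
      obtain ⟨h0', h1⟩ := powz' D1 hD1c0 i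
      rw [(mulz' _ _ h0' h1).2]
      simp
    | i+1, j+1 =>
      have h1 : (D1 ^ (i+1)).coeff 0 = 0 := by
        rw [coeff0_pow', hD1c0, zero_pow (Nat.succ_ne_zero i)]
      have h2 : (D2 ^ (j+1)).coeff 0 = 0 := by
        rw [coeff0_pow', hD2c0, zero_pow (Nat.succ_ne_zero j)]
      rw [coeff1_mul', h2, mul_coeff_zero, h1]
      simp
  constructor
  · rw [hg, Polynomial.finset_sum_coeff]
    refine Finset.sum_eq_zero fun i _ => ?_
    rw [Polynomial.finset_sum_coeff]
    exact Finset.sum_eq_zero fun j _ => hT0 i j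
  · rw [hg, Polynomial.finset_sum_coeff]
    have step : ∀ i ∈ Finset.range d,
        (∑ j ∈ Finset.range (d - i), T i j).coeff 1 =
        (if i = 0 then Ξ 0 0 - A 0 1 * η0 else if i = 1 then -(A 1 0 * ξ0) else 0) := by
      intro i hi
      rw [Polynomial.finset_sum_coeff]
      match i with
      | 0 =>
        simp only [Nat.sub_zero, if_pos rfl]
        have hsub : Finset.range 2 ⊆ Finset.range d := Finset.range_subset_range.2 (by omega)
        rw [← Finset.sum_subset hsub (fun j _ hj => ?_)]
        · rw [Finset.sum_range_succ, Finset.sum_range_succ, Finset.sum_range_zero,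
            hT1 0 0, hT1 0 1]
          simp; ring
        · rw [hT1]
          have : j ≠ 0 ∧ j ≠ 1 := by
            constructor <;> rintro rfl <;> simp at hj
          simp [this.1, this.2]
      | 1 =>
        simp only [if_neg one_ne_zero, if_pos rfl]
        have hsub : Finset.range 1 ⊆ Finset.range (d - 1) := Finset.range_subset_range.2 (by omega)
        rw [← Finset.sum_subset hsub (fun j _ hj => ?_)]
        · rw [Finset.sum_range_succ, Finset.sum_range_zero, hT1 1 0]
          simp
        · rw [hT1]
          have : j ≠ 0 := by rintro rfl; simp at hj
          simp [this]
      | n+2 =>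
        simp only [Nat.succ_ne_zero, if_false]
        refine Finset.sum_eq_zero fun j _ => ?_
        rw [hT1]
        simp
    rw [Finset.sum_congr rfl step]
    have hsub : Finset.range 2 ⊆ Finset.range d := Finset.range_subset_range.2 (by omega)
    rw [← Finset.sum_subset hsub (fun i _ hi => ?_)]
    · rw [Finset.sum_range_succ, Finset.sum_range_succ, Finset.sum_range_zero]
      simp; ring
    · have : i ≠ 0 ∧ i ≠ 1 := by constructor <;> rintro rfl <;> simp at hi
      simp [this.1, this.2]
end

section
/- Let d ≥ 3. Let A_{ij}, B_{ij} ∈ k be given for all integers i, j ≥ 0 with i + j ≤ d−1, with A_{00} = 0 and B_{00} = 0, and let ξ0, η0, ξ00, η00 ∈ k. In the polynomial ring k[x0,x1,x2,u0,u1,u2] define Φ11 = u1 + ξ0·u0, Φ21 = u2 + η0·u0, Φ12 = u1·(Σ_{i ≥ 1, i+j ≤ d−1} A_{ij}·x0^{d−1−i−j}·x1^{i−1}·x2^j) + u2·(Σ_{j ≥ 1, j ≤ d−1} A_{0j}·x0^{d−1−j}·x2^{j−1}) + ξ00·x0^{d−2}·u0, and Φ22 = u1·(Σ_{i ≥ 1,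 i+j ≤ d−1} B_{ij}·x0^{d−1−i−j}·x1^{i−1}·x2^j) + u2·(Σ_{j ≥ 1, j ≤ d−1} B_{0j}·x0^{d−1−j}·x2^{j−1}) + η00·x0^{d−2}·u0. Then there exist x = (x0,x1,x2) ∈ k^3 nonzero and u = (u0,u1,u2) ∈ k^3 nonzero with u0·x1 = 0, u0·x2 = 0, u1·x2 = u2·x1, and Φ11(x,u) = Φ12(x,u) = Φ21(x,u) = Φ22(x,u) = 0, if and only if ξ00 = A_{10}·ξ0 + A_{01}·η0 and η00 = B_{10}·ξ0 + B_{01}·η0. -/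
open MvPolynomial

/-- Entry 1.1 of the matrix `Φ(A, B)`: `u1 + ξ0·u0`. The variables of
`k[x0,x1,x2,u0,u1,u2]` are indexed so that `x0, x1, x2` are `X 0, X 1, X 2` and
`u0, u1, u2` are `X 3, X 4, X 5`. -/
noncomputable def Phi11 (k : Type*) [CommRing k] (c : k) : MvPolynomial (Fin 6) k :=
  X 4 + C c * X 3

/-- Entry 2.1 of the matrix `Φ(A, B)`: `u2 + η0·u0`. -/
noncomputable def Phi21 (k : Type*) [CommRing k] (c : k) : MvPolynomial (Fin 6) k :=
  X 5 + C c * X 3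

/-- An entry of the second column of the matrix `Φ(A, B)`:
`u1·(Σ_{i ≥ 1, i+j ≤ d−1} A_{ij}·x0^{d−1−i−j}·x1^{i−1}·x2^j)
 + u2·(Σ_{1 ≤ j ≤ d−1} A_{0j}·x0^{d−1−j}·x2^{j−1}) + c·x0^{d−2}·u0`. -/
noncomputable def PhiCol2 (k : Type*) [CommRing k] (d : ℕ) (A : ℕ → ℕ → k) (c : k) :
    MvPolynomial (Fin 6) k :=
  X 4 * (∑ i ∈ Finset.Icc 1 (d - 1), ∑ j ∈ Finset.range (d - i),
      C (A i j) * X 0 ^ (d - 1 - i - j) * X 1 ^ (i - 1) * X 2 ^ j)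
    + X 5 * (∑ j ∈ Finset.Icc 1 (d - 1), C (A 0 j) * X 0 ^ (d - 1 - j) * X 2 ^ (j - 1))
    + C c * X 0 ^ (d - 2) * X 3

lemma eval_PhiCol2' {k : Type*} [CommRing k] (d : ℕ) (hd : 3 ≤ d) (A : ℕ → ℕ → k)
    (c x0 u0 u1 u2 : k) :
    eval ![x0, 0, 0, u0, u1, u2] (PhiCol2 k d A c) =
      (u1 * A 1 0 + u2 * A 0 1 + c * u0) * x0 ^ (d - 2) := by
  have h1 : (1:ℕ) ∈ Finset.Icc 1 (d-1) := by simp; omega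
  have hs1 : (∑ i ∈ Finset.Icc 1 (d - 1), ∑ j ∈ Finset.range (d - i),
      (A i j) * x0 ^ (d - 1 - i - j) * (0:k) ^ (i - 1) * (0:k) ^ j) = A 1 0 * x0 ^ (d-2) := by
    rw [Finset.sum_eq_single 1]
    · rw [Finset.sum_eq_single 0]
      · have : d - 1 - 1 - 0 = d - 2 := by omega
        rw [this]; ring
      · intro j hj hj0
        rw [zero_pow hj0]; ring
      · intro h
        exfalso; exact h (by simp; omega)
    · intro i hi hi1
      have : i - 1 ≠ 0 := by simp at hi; omega
      simp [zero_pow this]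
    · intro h; exact absurd h1 h
  have hs2 : (∑ j ∈ Finset.Icc 1 (d - 1), (A 0 j) * x0 ^ (d - 1 - j) * (0:k) ^ (j - 1))
      = A 0 1 * x0 ^ (d-2) := by
    rw [Finset.sum_eq_single 1]
    · have : d - 1 - 1 = d - 2 := by omega
      rw [this]; simp
    · intro j hj hj1
      have : j - 1 ≠ 0 := by simp at hj; omega
      simp [zero_pow this]
    · intro h; exact absurd h1 h
  have e5 : ![x0, 0, 0, u0, u1, u2] (5 : Fin 6) = u2 := rfl
  have e4 : ![x0, 0, 0, u0, u1, u2] (4 : Fin 6) = u1 := rfl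
  have e3 : ![x0, 0, 0, u0, u1, u2] (3 : Fin 6) = u0 := rfl
  have e2 : ![x0, 0, 0, u0, u1, u2] (2 : Fin 6) = 0 := rfl
  have e1 : ![x0, 0, 0, u0, u1, u2] (1 : Fin 6) = 0 := rfl
  have e0 : ![x0, 0, 0, u0, u1, u2] (0 : Fin 6) = x0 := rfl
  simp only [PhiCol2, map_add, map_mul, map_pow, eval_X, eval_C, map_sum,
    e0, e1, e2, e3, e4, e5]
  rw [hs1, hs2]; ring

lemma eval_Phi11' {k : Type*} [CommRing k] (c x0 x1 x2 u0 u1 u2 : k) :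
    eval ![x0, x1, x2, u0, u1, u2] (Phi11 k c) = u1 + c * u0 := by
  have e4 : ![x0, x1, x2, u0, u1, u2] (4 : Fin 6) = u1 := rfl
  have e3 : ![x0, x1, x2, u0, u1, u2] (3 : Fin 6) = u0 := rfl
  simp only [Phi11, map_add, map_mul, eval_X, eval_C, e3, e4]

lemma eval_Phi21' {k : Type*} [CommRing k] (c x0 x1 x2 u0 u1 u2 : k) :
    eval ![x0, x1, x2, u0, u1, u2] (Phi21 k c) = u2 + c * u0 := by
  have e5 : ![x0, x1, x2, u0, u1, u2] (5 : Fin 6) = u2 := rfl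
  have e3 : ![x0, x1, x2, u0, u1, u2] (3 : Fin 6) = u0 := rfl
  simp only [Phi21, map_add, map_mul, eval_X, eval_C, e3, e5]

/-- The sheaf `E(A, B)` fails to be locally free on its support (i.e. the four entries of
`Φ(A, B)` have a common zero on the surface `D(p)`) exactly when the tangent vector
satisfies the tangent equations of the singular locus `X'`. -/
theorem stmt_10 {k : Type*} [Field k] [IsAlgClosed k] [CharZero k]
    (d : ℕ) (hd : 3 ≤ d)
    (A B : ℕ → ℕ → k) (hA00 : A 0 0 = 0) (hB00 : B 0 0 = 0)
    (ξ0 η0 ξ00 η00 : k) :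
    (∃ x u : Fin 3 → k, x ≠ 0 ∧ u ≠ 0 ∧
        u 0 * x 1 = 0 ∧ u 0 * x 2 = 0 ∧ u 1 * x 2 = u 2 * x 1 ∧
        eval ![x 0, x 1, x 2, u 0, u 1, u 2] (Phi11 k ξ0) = 0 ∧
        eval ![x 0, x 1, x 2, u 0, u 1, u 2] (PhiCol2 k d A ξ00) = 0 ∧
        eval ![x 0, x 1, x 2, u 0, u 1, u 2] (Phi21 k η0) = 0 ∧
        eval ![x 0, x 1, x 2, u 0, u 1, u 2] (PhiCol2 k d B η00) = 0)
      ↔ (ξ00 = A 1 0 * ξ0 + A 0 1 * η0 ∧ η00 = B 1 0 * ξ0 + B 0 1 * η0) := by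
  constructor
  · rintro ⟨x, u, hx, hu, h01, h02, h12, e11, eA, e21, eB⟩
    rw [eval_Phi11'] at e11
    rw [eval_Phi21'] at e21
    have hu0 : u 0 ≠ 0 := by
      intro h0
      apply hu
      have h1 : u 1 = 0 := by linear_combination e11 - ξ0 * h0
      have h2 : u 2 = 0 := by linear_combination e21 - η0 * h0
      funext i
      fin_cases i <;> simp [h0, h1, h2]
    have hx1 : x 1 = 0 := by
      rcases mul_eq_zero.1 h01 with h | h
      · exact absurd h hu0
      · exact h
    have hx2 : x 2 = 0 := by
      rcases mul_eq_zero.1 h02 with h | h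
      · exact absurd h hu0
      · exact h
    have hx0 : x 0 ≠ 0 := by
      intro h0
      apply hx
      funext i
      fin_cases i <;> simp [h0, hx1, hx2]
    rw [hx1, hx2, eval_PhiCol2' d hd] at eA
    rw [hx1, hx2, eval_PhiCol2' d hd] at eB
    have hpow : x 0 ^ (d - 2) ≠ 0 := pow_ne_zero _ hx0
    have hA' : u 1 * A 1 0 + u 2 * A 0 1 + ξ00 * u 0 = 0 :=
      (mul_eq_zero.1 eA).resolve_right hpow
    have hB' : u 1 * B 1 0 + u 2 * B 0 1 + η00 * u 0 = 0 :=
      (mul_eq_zero.1 eB).resolve_right hpow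
    have hu1 : u 1 = -ξ0 * u 0 := by linear_combination e11
    have hu2 : u 2 = -η0 * u 0 := by linear_combination e21
    rw [hu1, hu2] at hA' hB'
    constructor
    · have h : u 0 * (ξ00 - (A 1 0 * ξ0 + A 0 1 * η0)) = 0 := by linear_combination hA'
      rcases mul_eq_zero.1 h with h' | h'
      · exact absurd h' hu0
      · linear_combination h'
    · have h : u 0 * (η00 - (B 1 0 * ξ0 + B 0 1 * η0)) = 0 := by linear_combination hB'
      rcases mul_eq_zero.1 h with h' | h'
      · exact absurd h' hu0
      · linear_combination h'
  · rintro ⟨hξ, hη⟩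
    refine ⟨![1, 0, 0], ![1, -ξ0, -η0], ?_, ?_, ?_, ?_, ?_, ?_, ?_, ?_, ?_⟩
    · intro h; have := congrFun h 0; simp at this
    · intro h; have := congrFun h 0; simp at this
    · simp
    · simp
    · simp
    · rw [eval_Phi11']; simp
    · show eval ![1,0,0,1,-ξ0,-η0] (PhiCol2 k d A ξ00) = 0
      rw [eval_PhiCol2' d hd]
      have : -ξ0 * A 1 0 + -η0 * A 0 1 + ξ00 * 1 = 0 := by linear_combination hξ
      rw [this, zero_mul]
    · rw [eval_Phi21']; simp
    · show eval ![1,0,0,1,-ξ0,-η0] (PhiCol2 k d B η00) = 0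
      rw [eval_PhiCol2' d hd]
      have : -ξ0 * B 1 0 + -η0 * B 0 1 + η00 * 1 = 0 := by linear_combination hη
      rw [this, zero_mul]
end

section
/- Let d ≥ 3. Let A_{ij}, B_{ij} ∈ k be given for all integers i, j ≥ 0 with i + j ≤ d−1, with A_{00} = 0 and B_{00} = 0. Let ξ0, η0, ξ00, η00, μ0, ν0, μ00, ν00 ∈ k and α ∈ k with α ≠ 0 satisfy μ00 − α·ξ00 = A_{10}·(μ0 − α·ξ0) + A_{01}·(ν0 − α·η0) and ν00 − α·η00 = B_{10}·(μ0 − α·ξ0) + B_{01}·(ν0 − α·η0). Set β = μ0 − α·ξ0 and γ = ν0 − α·η0. In k[x0,x1,x2,u0,u1,u2] let Φ11, Φ12, Φ21, Φ22 be the four polynomials built from (A_{ij}, B_{ij}, ξ0, η0, ξ00, η00) as Φ11 = u1 + ξ0·u0, Φ21 = u2 + η0·u0, Φ12 = u1·(Σ_{i ≥ 1, i+j ≤ d−1} A_{ij}·x0^{d−1−i−j}·x1^{i−1}·x2^j) + u2·(Σ_{j ≥ 1, j ≤ d−1} A_{0j}·x0^{d−1−j}·x2^{j−1}) + ξ00·x0^{d−2}·u0,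 Φ22 analogous with B and η00; and let Ψ11, Ψ12, Ψ21, Ψ22 be the same polynomials built instead from (A_{ij}, B_{ij}, μ0, ν0, μ00, ν00). Let σ be the k-algebra endomorphism of k[x0,x1,x2,u0,u1,u2] fixing x0, x1, x2 and sending u0 ↦ α·u0, u1 ↦ u1 + β·u0, u2 ↦ u2 + γ·u0. Then for each index (k,l) ∈ {1,2}×{1,2}, the polynomial σ(Φ_{kl}) − Ψ_{kl} lies in the ideal of k[x0,x1,x2,u0,u1,u2] generated by u0·x1 and u0·x2. -/
open MvPolynomial

private lemma memI1 {k : Type*} [CommRing k] (c : k) (e i j : ℕ) (h : 1 ≤ i) :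
    (X 3 : MvPolynomial (Fin 6) k) * (C c * X 0 ^ e * X 1 ^ i * X 2 ^ j) ∈
      Ideal.span {(X 3 * X 1 : MvPolynomial (Fin 6) k), X 3 * X 2} := by
  obtain ⟨i, rfl⟩ := Nat.exists_eq_add_of_le h
  have : (X 3 : MvPolynomial (Fin 6) k) * (C c * X 0 ^ e * X 1 ^ (1 + i) * X 2 ^ j)
      = (X 3 * X 1) * (C c * X 0 ^ e * X 1 ^ i * X 2 ^ j) := by ring
  rw [this]
  exact Ideal.mul_mem_right _ _ (Ideal.subset_span (by simp))

private lemma memI2 {k : Type*} [CommRing k] (c : k) (e i j : ℕ) (h : 1 ≤ j) :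
    (X 3 : MvPolynomial (Fin 6) k) * (C c * X 0 ^ e * X 1 ^ i * X 2 ^ j) ∈
      Ideal.span {(X 3 * X 1 : MvPolynomial (Fin 6) k), X 3 * X 2} := by
  obtain ⟨j, rfl⟩ := Nat.exists_eq_add_of_le h
  have : (X 3 : MvPolynomial (Fin 6) k) * (C c * X 0 ^ e * X 1 ^ i * X 2 ^ (1 + j))
      = (X 3 * X 2) * (C c * X 0 ^ e * X 1 ^ i * X 2 ^ j) := by ring
  rw [this]
  exact Ideal.mul_mem_right _ _ (Ideal.subset_span (by simp))

private lemma memI2' {k : Type*} [CommRing k] (c : k) (e j : ℕ) (h : 1 ≤ j) :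
    (X 3 : MvPolynomial (Fin 6) k) * (C c * X 0 ^ e * X 2 ^ j) ∈
      Ideal.span {(X 3 * X 1 : MvPolynomial (Fin 6) k), X 3 * X 2} := by
  obtain ⟨j, rfl⟩ := Nat.exists_eq_add_of_le h
  have : (X 3 : MvPolynomial (Fin 6) k) * (C c * X 0 ^ e * X 2 ^ (1 + j))
      = (X 3 * X 2) * (C c * X 0 ^ e * X 2 ^ j) := by ring
  rw [this]
  exact Ideal.mul_mem_right _ _ (Ideal.subset_span (by simp))

private lemma key1 {k : Type*} [CommRing k] (d : ℕ) (hd : 3 ≤ d) (A : ℕ → ℕ → k) :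
    (X 3 : MvPolynomial (Fin 6) k) *
      (∑ i ∈ Finset.Icc 1 (d - 1), ∑ j ∈ Finset.range (d - i),
        C (A i j) * X 0 ^ (d - 1 - i - j) * X 1 ^ (i - 1) * X 2 ^ j)
      - C (A 1 0) * X 0 ^ (d - 2) * X 3 ∈
      Ideal.span {(X 3 * X 1 : MvPolynomial (Fin 6) k), X 3 * X 2} := by
  have h1 : 1 ∈ Finset.Icc 1 (d - 1) := by simp; omega
  have h0 : 0 ∈ Finset.range (d - 1) := by simp; omega
  rw [Finset.mul_sum, ← Finset.sum_erase_add _ _ h1, Finset.mul_sum,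
    ← Finset.sum_erase_add _ _ h0]
  have hc : (X 3 : MvPolynomial (Fin 6) k) *
      (C (A 1 0) * X 0 ^ (d - 1 - 1 - 0) * X 1 ^ (1 - 1) * X 2 ^ 0)
      = C (A 1 0) * X 0 ^ (d - 2) * X 3 := by
    have h : d - 1 - 1 - 0 = d - 2 := by omega
    rw [h]; ring
  rw [hc, add_sub_assoc, add_sub_cancel_right]
  refine Ideal.add_mem _ (Ideal.sum_mem _ fun i hi => ?_) (Ideal.sum_mem _ fun j hj => ?_)
  · rw [Finset.mem_erase, Finset.mem_Icc] at hi
    rw [Finset.mul_sum]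
    exact Ideal.sum_mem _ fun j _ => memI1 _ _ _ _ (by omega)
  · rw [Finset.mem_erase] at hj
    exact memI2 _ _ _ _ (by omega)

private lemma key2 {k : Type*} [CommRing k] (d : ℕ) (hd : 3 ≤ d) (A : ℕ → ℕ → k) :
    (X 3 : MvPolynomial (Fin 6) k) *
      (∑ j ∈ Finset.Icc 1 (d - 1), C (A 0 j) * X 0 ^ (d - 1 - j) * X 2 ^ (j - 1))
      - C (A 0 1) * X 0 ^ (d - 2) * X 3 ∈
      Ideal.span {(X 3 * X 1 : MvPolynomial (Fin 6) k), X 3 * X 2} := by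
  have h1 : 1 ∈ Finset.Icc 1 (d - 1) := by simp; omega
  rw [Finset.mul_sum, ← Finset.sum_erase_add _ _ h1]
  have hc : (X 3 : MvPolynomial (Fin 6) k) *
      (C (A 0 1) * X 0 ^ (d - 1 - 1) * X 2 ^ (1 - 1))
      = C (A 0 1) * X 0 ^ (d - 2) * X 3 := by
    have h : d - 1 - 1 = d - 2 := by omega
    rw [h]; ring
  rw [hc, add_sub_cancel_right]
  refine Ideal.sum_mem _ fun j hj => ?_
  rw [Finset.mem_erase, Finset.mem_Icc] at hj
  exact memI2' _ _ _ (by omega)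

/-- If `B2 − α·B1` satisfies the tangent equations of the singular locus, then the
pullback `σ` along the automorphism `[[α,β,γ],[0,1,0],[0,0,1]]` of the plane component
of `D(p)` carries the entries of `Φ(A, B1)` to those of `Φ(A, B2)` modulo the ideal
`(u0·x1, u0·x2)` defining `D(p)`. -/
theorem stmt_11 {k : Type*} [Field k] [IsAlgClosed k] [CharZero k]
    (d : ℕ) (hd : 3 ≤ d)
    (A B : ℕ → ℕ → k) (hA00 : A 0 0 = 0) (hB00 : B 0 0 = 0)
    (ξ0 η0 ξ00 η00 μ0 ν0 μ00 ν00 α β γ : k) (hα : α ≠ 0)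
    (htan1 : μ00 - α * ξ00 = A 1 0 * (μ0 - α * ξ0) + A 0 1 * (ν0 - α * η0))
    (htan2 : ν00 - α * η00 = B 1 0 * (μ0 - α * ξ0) + B 0 1 * (ν0 - α * η0))
    (hβ : β = μ0 - α * ξ0) (hγ : γ = ν0 - α * η0)
    (σ : MvPolynomial (Fin 6) k →ₐ[k] MvPolynomial (Fin 6) k)
    (hσ : σ = aeval ![X 0, X 1, X 2, C α * X 3, X 4 + C β * X 3, X 5 + C γ * X 3]) :
    σ (Phi11 k ξ0) - Phi11 k μ0 ∈
        Ideal.span {(X 3 * X 1 : MvPolynomial (Fin 6) k), X 3 * X 2} ∧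
      σ (PhiCol2 k d A ξ00) - PhiCol2 k d A μ00 ∈
        Ideal.span {(X 3 * X 1 : MvPolynomial (Fin 6) k), X 3 * X 2} ∧
      σ (Phi21 k η0) - Phi21 k ν0 ∈
        Ideal.span {(X 3 * X 1 : MvPolynomial (Fin 6) k), X 3 * X 2} ∧
      σ (PhiCol2 k d B η00) - PhiCol2 k d B ν00 ∈
        Ideal.span {(X 3 * X 1 : MvPolynomial (Fin 6) k), X 3 * X 2} := by
  subst hσ
  have h0 : (![X 0, X 1, X 2, C α * X 3, X 4 + C β * X 3, X 5 + C γ * X 3] :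
      Fin 6 → MvPolynomial (Fin 6) k) 0 = X 0 := rfl
  have h1 : (![X 0, X 1, X 2, C α * X 3, X 4 + C β * X 3, X 5 + C γ * X 3] :
      Fin 6 → MvPolynomial (Fin 6) k) 1 = X 1 := rfl
  have h2 : (![X 0, X 1, X 2, C α * X 3, X 4 + C β * X 3, X 5 + C γ * X 3] :
      Fin 6 → MvPolynomial (Fin 6) k) 2 = X 2 := rfl
  have h3 : (![X 0, X 1, X 2, C α * X 3, X 4 + C β * X 3, X 5 + C γ * X 3] :
      Fin 6 → MvPolynomial (Fin 6) k) 3 = C α * X 3 := rfl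
  have h4 : (![X 0, X 1, X 2, C α * X 3, X 4 + C β * X 3, X 5 + C γ * X 3] :
      Fin 6 → MvPolynomial (Fin 6) k) 4 = X 4 + C β * X 3 := rfl
  have h5 : (![X 0, X 1, X 2, C α * X 3, X 4 + C β * X 3, X 5 + C γ * X 3] :
      Fin 6 → MvPolynomial (Fin 6) k) 5 = X 5 + C γ * X 3 := rfl
  refine ⟨?_, ?_, ?_, ?_⟩
  · -- Phi11
    have hc : (C β : MvPolynomial (Fin 6) k) = C μ0 - C ξ0 * C α := by
      rw [hβ, map_sub, map_mul]; ring
    have hz : aeval ![X 0, X 1, X 2, C α * X 3, X 4 + C β * X 3, X 5 + C γ * X 3]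
        (Phi11 k ξ0) - Phi11 k μ0 = 0 := by
      simp only [Phi11, map_add, map_mul, aeval_X, aeval_C, algebraMap_eq, h3, h4]
      linear_combination (X 3 : MvPolynomial (Fin 6) k) * hc
    rw [hz]
    exact Ideal.zero_mem _
  · -- PhiCol2 with A
    have hμ : μ00 = ξ00 * α + β * A 1 0 + γ * A 0 1 := by
      rw [hβ, hγ]; linear_combination htan1
    have hc2 : (C μ00 : MvPolynomial (Fin 6) k)
        = C ξ00 * C α + C β * C (A 1 0) + C γ * C (A 0 1) := by
      rw [hμ, map_add, map_add, map_mul, map_mul, map_mul]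
    have hrepr : aeval ![X 0, X 1, X 2, C α * X 3, X 4 + C β * X 3, X 5 + C γ * X 3]
        (PhiCol2 k d A ξ00) - PhiCol2 k d A μ00
        = C β * ((X 3 : MvPolynomial (Fin 6) k) *
            (∑ i ∈ Finset.Icc 1 (d - 1), ∑ j ∈ Finset.range (d - i),
              C (A i j) * X 0 ^ (d - 1 - i - j) * X 1 ^ (i - 1) * X 2 ^ j)
            - C (A 1 0) * X 0 ^ (d - 2) * X 3)
          + C γ * ((X 3 : MvPolynomial (Fin 6) k) *
            (∑ j ∈ Finset.Icc 1 (d - 1), C (A 0 j) * X 0 ^ (d - 1 - j) * X 2 ^ (j - 1))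
            - C (A 0 1) * X 0 ^ (d - 2) * X 3) := by
      simp only [PhiCol2, map_add, map_mul, map_sum, map_pow, aeval_X, aeval_C,
        algebraMap_eq, h0, h1, h2, h3, h4, h5]
      linear_combination (-(X 0 ^ (d - 2) * X 3) : MvPolynomial (Fin 6) k) * hc2
    rw [hrepr]
    exact Ideal.add_mem _ (Ideal.mul_mem_left _ _ (key1 d hd A))
      (Ideal.mul_mem_left _ _ (key2 d hd A))
  · -- Phi21
    have hc : (C γ : MvPolynomial (Fin 6) k) = C ν0 - C η0 * C α := by
      rw [hγ, map_sub, map_mul]; ring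
    have hz : aeval ![X 0, X 1, X 2, C α * X 3, X 4 + C β * X 3, X 5 + C γ * X 3]
        (Phi21 k η0) - Phi21 k ν0 = 0 := by
      simp only [Phi21, map_add, map_mul, aeval_X, aeval_C, algebraMap_eq, h3, h5]
      linear_combination (X 3 : MvPolynomial (Fin 6) k) * hc
    rw [hz]
    exact Ideal.zero_mem _
  · -- PhiCol2 with B
    have hν : ν00 = η00 * α + β * B 1 0 + γ * B 0 1 := by
      rw [hβ, hγ]; linear_combination htan2
    have hc2 : (C ν00 : MvPolynomial (Fin 6) k)
        = C η00 * C α + C β * C (B 1 0) + C γ * C (B 0 1) := by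
      rw [hν, map_add, map_add, map_mul, map_mul, map_mul]
    have hrepr : aeval ![X 0, X 1, X 2, C α * X 3, X 4 + C β * X 3, X 5 + C γ * X 3]
        (PhiCol2 k d B η00) - PhiCol2 k d B ν00
        = C β * ((X 3 : MvPolynomial (Fin 6) k) *
            (∑ i ∈ Finset.Icc 1 (d - 1), ∑ j ∈ Finset.range (d - i),
              C (B i j) * X 0 ^ (d - 1 - i - j) * X 1 ^ (i - 1) * X 2 ^ j)
            - C (B 1 0) * X 0 ^ (d - 2) * X 3)
          + C γ * ((X 3 : MvPolynomial (Fin 6) k) *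
            (∑ j ∈ Finset.Icc 1 (d - 1), C (B 0 j) * X 0 ^ (d - 1 - j) * X 2 ^ (j - 1))
            - C (B 0 1) * X 0 ^ (d - 2) * X 3) := by
      simp only [PhiCol2, map_add, map_mul, map_sum, map_pow, aeval_X, aeval_C,
        algebraMap_eq, h0, h1, h2, h3, h4, h5]
      linear_combination (-(X 0 ^ (d - 2) * X 3) : MvPolynomial (Fin 6) k) * hc2
    rw [hrepr]
    exact Ideal.add_mem _ (Ideal.mul_mem_left _ _ (key1 d hd B))
      (Ideal.mul_mem_left _ _ (key2 d hd B))
end
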